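/- Let K be a field and E an evolution K-algebra (a K-vector space with bilinear product admitting a basis {e_i} with e_i e_j = 0 for i ≠ j) which is NOT associative. Let λ₀,λ₁,λ₂,λ₃ ∈ K, let B be a commutative associative (not necessarily unital) K-algebra with a K-linear involution *, and let σ : E → B be an injective K-linear map with σ(xy) = p(σ(x),σ(y)) for all x,y ∈ E, where p(u,v) = λ₀uv + λ₁uv* + λ₂u*v + λ₃u*v*. Then: (1) there exists x ∈ E with σ(x)* ≠ σ(x), i.e. σ(E) is not contained in the symmetric elements of (B,*); and (2) the map τ : E → B defined by τ(x) := σ(x)* also satisfies τ(xy) = p(τ(x),τ(y)) for all x,y ∈ E (so τ is a faithful representation relative to the same p), and τ ≠ σ. -/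

import Mathlib

/-!
If `σ(E)` consisted of symmetric elements, the product `p` would collapse on `σ(E)` to
`(λ₀ + λ₁ + λ₂ + λ₃) • uv`, so `σ` would carry the product of `E` to a scalar multiple of the
associative product of `B`, and injectivity of `σ` would make `E` associative. Part (2) holds
because `*` is a multiplicative linear map, so it commutes with `p` term by term.
-/

theorem Function.Injective.mul_assoc_of_map_mul_eq_smul {R E B : Type*} [Mul E] [Semigroup B]
    [SMul R B] [IsScalarTower R B B] [SMulCommClass R B B] {f : E → B}
    (hf : Function.Injective f) (c : R) (hmul : ∀ x y, f (x * y) = c • (f x * f y))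
    (x y z : E) : x * y * z = x * (y * z) :=
  hf <| by simp only [hmul, smul_mul_assoc, mul_smul_comm, mul_assoc]

section TwistedMul

variable {K B : Type*} [CommSemiring K] [NonUnitalNonAssocSemiring B] [Module K B]

/-- The product `p(u,v) = λ₀uv + λ₁uv* + λ₂u*v + λ₃u*v*` attached to an involution `s = *`. -/
def twistedMul (l0 l1 l2 l3 : K) (s : B → B) (u v : B) : B :=
  l0 • (u * v) + l1 • (u * s v) + l2 • (s u * v) + l3 • (s u * s v)

theorem twistedMul_of_fixed (l0 l1 l2 l3 : K) {s : B → B} {u v : B} (hu : s u = u)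
    (hv : s v = v) : twistedMul l0 l1 l2 l3 s u v = (l0 + l1 + l2 + l3) • (u * v) := by
  simp only [twistedMul, hu, hv, add_smul]

theorem map_twistedMul (l0 l1 l2 l3 : K) (s : B →ₗ[K] B) (hmul : ∀ u v, s (u * v) = s u * s v)
    (u v : B) : s (twistedMul l0 l1 l2 l3 s u v) = twistedMul l0 l1 l2 l3 s (s u) (s v) := by
  simp only [twistedMul, map_add, map_smul, hmul]

end TwistedMul

theorem stmt17_general (K : Type) [Field K] (E : Type) [NonUnitalNonAssocRing E]
    [Module K E]
    (hna : ¬ ∀ x y z : E, x * y * z = x * (y * z))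
    (l0 l1 l2 l3 : K)
    (B : Type) [NonUnitalCommRing B] [Module K B]
    [SMulCommClass K B B] [IsScalarTower K B B]
    (s : B →ₗ[K] B)
    (hsmul : ∀ x y : B, s (x * y) = s x * s y)
    (σ : E →ₗ[K] B) (hinj : Function.Injective σ)
    (hrep : ∀ x y : E, σ (x * y) =
      l0 • (σ x * σ y) + l1 • (σ x * s (σ y)) + l2 • (s (σ x) * σ y) +
        l3 • (s (σ x) * s (σ y))) :
    (∃ x : E, s (σ x) ≠ σ x) ∧
    (∀ x y : E, s (σ (x * y)) =
      l0 • (s (σ x) * s (σ y)) + l1 • (s (σ x) * s (s (σ y))) +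
        l2 • (s (s (σ x)) * s (σ y)) + l3 • (s (s (σ x)) * s (s (σ y)))) ∧
    (fun x : E => s (σ x)) ≠ (fun x : E => σ x) := by
  have hrep' : ∀ x y, σ (x * y) = twistedMul l0 l1 l2 l3 s (σ x) (σ y) := hrep
  have hnotSym : ∃ x : E, s (σ x) ≠ σ x := by
    by_contra! hsym
    exact hna <| hinj.mul_assoc_of_map_mul_eq_smul (l0 + l1 + l2 + l3) fun x y => by
      rw [hrep', twistedMul_of_fixed _ _ _ _ (hsym x) (hsym y)]
  refine ⟨hnotSym, fun x y => by rw [hrep']; exact map_twistedMul l0 l1 l2 l3 s hsmul _ _, ?_⟩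
  obtain ⟨x, hx⟩ := hnotSym
  exact fun h => hx (congrFun h x)

/-- Let `E` be a non-associative evolution `K`-algebra and
`σ : E → B` a faithful associative and commutative representation relative to
`p(u,v) = λ₀uv + λ₁uv* + λ₂u*v + λ₃u*v*`.  Then (1) `σ(E)` is not contained in the
symmetric elements of `(B,*)`, and (2) `τ := * ∘ σ` is also a representation relative
to the same `p`, and `τ ≠ σ`. -/
theorem stmt17 (K : Type) [Field K] (E : Type) [NonUnitalNonAssocRing E]
    [Module K E] [SMulCommClass K E E] [IsScalarTower K E E]
    (hbasis : ∃ (ι : Type) (b : Module.Basis ι K E), ∀ i j : ι, i ≠ j → b i * b j = 0)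
    (hna : ¬ ∀ x y z : E, x * y * z = x * (y * z))
    (l0 l1 l2 l3 : K)
    (B : Type) [NonUnitalCommRing B] [Module K B]
    [SMulCommClass K B B] [IsScalarTower K B B]
    (s : B →ₗ[K] B)
    (hsmul : ∀ x y : B, s (x * y) = s x * s y)
    (hsinv : ∀ x : B, s (s x) = x)
    (σ : E →ₗ[K] B) (hinj : Function.Injective σ)
    (hrep : ∀ x y : E, σ (x * y) =
      l0 • (σ x * σ y) + l1 • (σ x * s (σ y)) + l2 • (s (σ x) * σ y) +
        l3 • (s (σ x) * s (σ y))) :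
    (∃ x : E, s (σ x) ≠ σ x) ∧
    (∀ x y : E, s (σ (x * y)) =
      l0 • (s (σ x) * s (σ y)) + l1 • (s (σ x) * s (s (σ y))) +
        l2 • (s (s (σ x)) * s (σ y)) + l3 • (s (s (σ x)) * s (s (σ y)))) ∧
    (fun x : E => s (σ x)) ≠ (fun x : E => σ x) :=
  stmt17_general K E hna l0 l1 l2 l3 B s hsmul σ hinj hrep
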